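/- Let (X,d) be a reflexive metric space admitting midpoints that is Busemann, strictly p-convex for some p ∈ [1,∞], and uniformly q-convex for some q ∈ [1,∞]. Then for every r > 1, every measure μ ∈ W_r(X) has a unique nearest Dirac measure, i.e. reach({δ_z : z ∈ X} ⊆ W_r(X)) = ∞. -/

import Mathlib

/-!
`W_r(μ, δ_z)` is the `L^r(μ)`-norm of `d(·, z)`. By Minkowski's inequality this function of `z`
is `1`-Lipschitz, convex along midpoints in a Busemann space, and has bounded sublevel sets;
reflexivity then makes the nested sublevel sets above its infimum meet, which gives a nearest
Dirac mass. Two distinct minimizers `z₀, z₁` are impossible: their midpoint `m` satisfies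
`d(x,m)^r < (d(x,z₀)^r + d(x,z₁)^r)/2` for every `x` (by strict convexity of `t ↦ t^r` if
`d(x,z₀) ≠ d(x,z₁)`, by strict convexity of `X` otherwise), and integrating against `μ` shows
that `m` is strictly closer to `μ`.
-/

open MeasureTheory ENNReal Set

noncomputable section

/-- The set of couplings (transference plans) between two measures. -/
def Couplings {X : Type*} [MeasurableSpace X] (μ ν : Measure X) :
    Set (Measure (X × X)) :=
  {π | π.map Prod.fst = μ ∧ π.map Prod.snd = ν}

/-- The `p`-Wasserstein (extended) distance between two measures. -/
def Wp {X : Type*} [PseudoEMetricSpace X] [MeasurableSpace X] (p : ℝ)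
    (μ ν : Measure X) : ℝ≥0∞ :=
  (⨅ π ∈ Couplings μ ν, ∫⁻ z, edist z.1 z.2 ^ p ∂π) ^ (1 / p)

/-- The `p`-Wasserstein space: probability measures with finite `p`-th moment. -/
def WSpace (X : Type*) [PseudoEMetricSpace X] [MeasurableSpace X] (p : ℝ) :
    Set (Measure X) :=
  {μ | IsProbabilityMeasure μ ∧ ∃ x₀ : X, ∫⁻ x, edist x x₀ ^ p ∂μ ≠ ⊤}

/-- The image of `X` in its Wasserstein space: the set of Dirac measures. -/
def Diracs (X : Type*) [MeasurableSpace X] : Set (Measure X) :=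
  Set.range (Measure.dirac : X → Measure X)

/-- Distance from a point to a set, with respect to a distance function `ρ`. -/
def distToSet {Y : Type*} (ρ : Y → Y → ℝ≥0∞) (y : Y) (A : Set Y) : ℝ≥0∞ :=
  ⨅ a ∈ A, ρ y a

/-- `y` has a unique metric projection onto `A`. -/
def HasUniqueProj {Y : Type*} (ρ : Y → Y → ℝ≥0∞) (A : Set Y) (y : Y) : Prop :=
  ∃! a, a ∈ A ∧ ρ y a = distToSet ρ y A

/-- The reach of `A` at `a ∈ A`, within the ambient set `S`: the supremum of radii `r`
such that every point of the ball `B_r(a) ∩ S` has a unique metric projection onto `A`. -/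
def reachAt {Y : Type*} (ρ : Y → Y → ℝ≥0∞) (S A : Set Y) (a : Y) : ℝ≥0∞ :=
  sSup {r : ℝ≥0∞ | ∀ y ∈ S, ρ a y < r → HasUniqueProj ρ A y}

/-- The global reach of `A` within the ambient set `S`. -/
def globalReach {Y : Type*} (ρ : Y → Y → ℝ≥0∞) (S A : Set Y) : ℝ≥0∞ :=
  ⨅ a ∈ A, reachAt ρ S A a

/-- A minimizing geodesic from `x` to `y`, parametrized proportionally on `[0,1]`. -/
def IsMinGeodesic {X : Type*} [PseudoMetricSpace X] (γ : ℝ → X) (x y : X) : Prop :=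
  γ 0 = x ∧ γ 1 = y ∧
    ∀ s ∈ Set.Icc (0:ℝ) 1, ∀ t ∈ Set.Icc (0:ℝ) 1, dist (γ s) (γ t) = |s - t| * dist x y

/-- A geodesic metric space: any two points are joined by a minimizing geodesic. -/
def IsGeodesicSpace (X : Type*) [PseudoMetricSpace X] : Prop :=
  ∀ x y : X, ∃ γ : ℝ → X, IsMinGeodesic γ x y

/-- `a` lies on some minimizing geodesic from `x` to `y`. -/
def OnMinGeodesic {X : Type*} [PseudoMetricSpace X] (a x y : X) : Prop :=
  ∃ γ : ℝ → X, ∃ t ∈ Set.Icc (0:ℝ) 1, IsMinGeodesic γ x y ∧ γ t = a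

/-- `m` is a midpoint of `x` and `y`. -/
def IsMidpoint {X : Type*} [PseudoMetricSpace X] (x y m : X) : Prop :=
  dist x m = dist x y / 2 ∧ dist y m = dist x y / 2

/-- `X` admits midpoints. -/
def MidpointSpace (X : Type*) [PseudoMetricSpace X] : Prop :=
  ∀ x y : X, ∃ m : X, IsMidpoint x y m

/-- `X` is `p`-convex (`p ∈ [1,∞)`). -/
def PConvex (X : Type*) [PseudoMetricSpace X] (p : ℝ) : Prop :=
  ∀ x y z m : X, IsMidpoint x y m →
    dist m z ≤ (dist x z ^ p / 2 + dist y z ^ p / 2) ^ (1 / p)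

/-- `X` is strictly `p`-convex (`p ∈ [1,∞)`): the `p`-convexity inequality is strict for
`x ≠ y` when `p > 1`, and strict whenever `d(x,y) > |d(x,z) - d(y,z)|` when `p = 1`. -/
def StrictlyPConvex (X : Type*) [PseudoMetricSpace X] (p : ℝ) : Prop :=
  PConvex X p ∧
    ∀ x y z m : X, IsMidpoint x y m →
      ((p ≠ 1 ∧ x ≠ y) ∨ (p = 1 ∧ |dist x z - dist y z| < dist x y)) →
      dist m z < (dist x z ^ p / 2 + dist y z ^ p / 2) ^ (1 / p)

/-- `X` is `∞`-convex. -/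
def InftyConvex (X : Type*) [PseudoMetricSpace X] : Prop :=
  ∀ x y z m : X, IsMidpoint x y m → dist m z ≤ max (dist x z) (dist y z)

/-- `X` is strictly `∞`-convex. -/
def StrictlyInftyConvex (X : Type*) [PseudoMetricSpace X] : Prop :=
  InftyConvex X ∧
    ∀ x y z m : X, IsMidpoint x y m → x ≠ y →
      dist m z < max (dist x z) (dist y z)

/-- `X` is uniformly `p`-convex (`p ∈ [1,∞)`). -/
def UniformlyPConvex (X : Type*) [PseudoMetricSpace X] (p : ℝ) : Prop :=
  PConvex X p ∧
    ∀ ε : ℝ, 0 < ε → ∃ ρ : ℝ, ρ ∈ Set.Ioo (0:ℝ) 1 ∧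
      ∀ x y z m : X, IsMidpoint x y m →
        ((p ≠ 1 ∧ ε * (dist x z ^ p / 2 + dist y z ^ p / 2) ^ (1 / p) < dist x y) ∨
          (p = 1 ∧
            |dist x z - dist y z| + ε * (dist x z / 2 + dist y z / 2) < dist x y)) →
        dist m z ≤ (1 - ρ) * (dist x z ^ p / 2 + dist y z ^ p / 2) ^ (1 / p)

/-- `X` is uniformly `∞`-convex. -/
def UniformlyInftyConvex (X : Type*) [PseudoMetricSpace X] : Prop :=
  InftyConvex X ∧
    ∀ ε : ℝ, 0 < ε → ∃ ρ : ℝ, ρ ∈ Set.Ioo (0:ℝ) 1 ∧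
      ∀ x y z m : X, IsMidpoint x y m →
        ε * max (dist x z) (dist y z) < dist x y →
        dist m z ≤ (1 - ρ) * max (dist x z) (dist y z)

/-- `X` is Busemann. -/
def Busemann (X : Type*) [PseudoMetricSpace X] : Prop :=
  ∀ x₀ x₁ y₀ y₁ mx my : X, IsMidpoint x₀ x₁ mx → IsMidpoint y₀ y₁ my →
    dist mx my ≤ dist x₀ y₀ / 2 + dist x₁ y₁ / 2

/-- A subset `C` of a metric space is (metrically) convex: it contains every midpoint of any
two of its points. -/
def MConvexSet {X : Type*} [PseudoMetricSpace X] (C : Set X) : Prop :=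
  ∀ x ∈ C, ∀ y ∈ C, ∀ m : X, IsMidpoint x y m → m ∈ C

/-- `X` is reflexive: every directed non-increasing family of nonempty bounded closed convex
subsets has nonempty intersection. -/
def ReflexiveSpace (X : Type*) [PseudoMetricSpace X] : Prop :=
  ∀ (I : Type) [Preorder I] [Nonempty I], IsDirected I (· ≤ ·) →
    ∀ C : I → Set X,
      (∀ i : I, (C i).Nonempty ∧ Bornology.IsBounded (C i) ∧ IsClosed (C i) ∧
        MConvexSet (C i)) →
      (∀ i j : I, i ≤ j → C j ⊆ C i) →
      (⋂ i : I, C i).Nonempty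
open scoped NNReal

section Midpoints

variable {X : Type*} [MetricSpace X] {z₀ z₁ m : X}

def StrictlyPConvexForSome (X : Type*) [PseudoMetricSpace X] : Prop :=
  (∃ p : ℝ, 1 ≤ p ∧ StrictlyPConvex X p) ∨ StrictlyInftyConvex X

lemma isMidpoint_self (x : X) : IsMidpoint x x x := by
  simp [IsMidpoint]

lemma Busemann.dist_le_of_isMidpoint (hbus : Busemann X) (hm : IsMidpoint z₀ z₁ m) (x : X) :
    dist x m ≤ (dist x z₀ + dist x z₁) / 2 := by
  have := hbus z₀ z₁ x x m x hm (isMidpoint_self x)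
  rw [dist_comm x m, dist_comm x z₀, dist_comm x z₁]
  linarith

lemma Busemann.edist_le_of_isMidpoint (hbus : Busemann X) (hm : IsMidpoint z₀ z₁ m) (x : X) :
    edist x m ≤ (edist x z₀ + edist x z₁) / 2 := by
  rw [edist_dist, edist_dist, edist_dist, ← ENNReal.ofReal_add dist_nonneg dist_nonneg,
    ← ENNReal.ofReal_ofNat 2, ← ENNReal.ofReal_div_of_pos two_pos]
  exact ENNReal.ofReal_le_ofReal (hbus.dist_le_of_isMidpoint hm x)

lemma dist_lt_of_isMidpoint_of_dist_eq
    (hstrict : StrictlyPConvexForSome X) (hm : IsMidpoint z₀ z₁ m) (hne : z₀ ≠ z₁) {x : X} (heq : dist x z₀ = dist x z₁) :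
    dist x m < dist x z₀ := by
  rw [dist_comm x m, dist_comm x z₀]
  rw [dist_comm x z₀, dist_comm x z₁] at heq
  rcases hstrict with ⟨p, hp, hX⟩ | hX
  · obtain rfl | hp1 := eq_or_ne p 1
    · have hlt : |dist z₀ x - dist z₁ x| < dist z₀ z₁ := by
        simpa [heq] using dist_pos.2 hne
      simpa [heq] using hX.2 z₀ z₁ x m hm (Or.inr ⟨rfl, hlt⟩)
    · have hpow : (dist z₀ x ^ p / 2 + dist z₀ x ^ p / 2) ^ (1 / p) = dist z₀ x := by
        rw [add_halves, ← Real.rpow_mul dist_nonneg, mul_one_div_cancel (by linarith),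
          Real.rpow_one]
      have := hX.2 z₀ z₁ x m hm (Or.inl ⟨hp1, hne⟩)
      rwa [← heq, hpow] at this
  · simpa [← heq] using hX.2 z₀ z₁ x m hm hne

lemma dist_rpow_lt_of_isMidpoint (hbus : Busemann X)
    (hstrict : StrictlyPConvexForSome X)
    {r : ℝ} (hr : 1 < r) (hm : IsMidpoint z₀ z₁ m) (hne : z₀ ≠ z₁) (x : X) :
    dist x m ^ r < (dist x z₀ ^ r + dist x z₁ ^ r) / 2 := by
  obtain heq | hne' := eq_or_ne (dist x z₀) (dist x z₁)
  · calc dist x m ^ r < dist x z₀ ^ r :=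
          Real.rpow_lt_rpow dist_nonneg (dist_lt_of_isMidpoint_of_dist_eq hstrict hm hne heq)
            (by linarith)
      _ = (dist x z₀ ^ r + dist x z₁ ^ r) / 2 := by rw [← heq]; ring
  · calc dist x m ^ r ≤ ((dist x z₀ + dist x z₁) / 2) ^ r :=
          Real.rpow_le_rpow dist_nonneg (hbus.dist_le_of_isMidpoint hm x) (by linarith)
      _ < (dist x z₀ ^ r + dist x z₁ ^ r) / 2 := by
          have := (strictConvexOn_rpow hr).2 (Set.mem_Ici.2 dist_nonneg)
            (Set.mem_Ici.2 dist_nonneg) hne' one_half_pos one_half_pos (add_halves 1)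
          rw [div_eq_inv_mul, div_eq_inv_mul, mul_add, mul_add]
          simpa only [smul_eq_mul, one_div] using this

lemma edist_rpow_lt_of_isMidpoint (hbus : Busemann X)
    (hstrict : StrictlyPConvexForSome X)
    {r : ℝ} (hr : 1 < r) (hm : IsMidpoint z₀ z₁ m) (hne : z₀ ≠ z₁) (x : X) :
    edist x m ^ r < (edist x z₀ ^ r + edist x z₁ ^ r) / 2 := by
  have hr0 : 0 ≤ r := by linarith
  simp only [edist_dist, ENNReal.ofReal_rpow_of_nonneg dist_nonneg hr0]
  rw [← ENNReal.ofReal_add (by positivity) (by positivity), ← ENNReal.ofReal_ofNat 2,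
    ← ENNReal.ofReal_div_of_pos two_pos,
    ENNReal.ofReal_lt_ofReal_iff_of_nonneg (by positivity)]
  exact dist_rpow_lt_of_isMidpoint hbus hstrict hr hm hne x

end Midpoints

lemma eLpNorm_const_of_isProbabilityMeasure {α ε : Type*} [MeasurableSpace α]
    [TopologicalSpace ε] [ContinuousENorm ε] (μ : Measure α) [IsProbabilityMeasure μ]
    {p : ℝ≥0∞} (hp : p ≠ 0) (c : ε) :
    eLpNorm (fun _ : α => c) p μ = ‖c‖ₑ := by
  rw [eLpNorm_const _ hp (IsProbabilityMeasure.ne_zero μ), measure_univ, ENNReal.one_rpow, mul_one]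

section LpDistance

variable {X : Type*} [MetricSpace X] [MeasurableSpace X]

def eLpNormDist (μ : Measure X) (p : ℝ≥0∞) (z : X) : ℝ≥0∞ :=
  eLpNorm (fun x => edist x z) p μ

lemma eLpNormDist_ofReal_rpow (μ : Measure X) {r : ℝ} (hr : 0 < r) (z : X) :
    eLpNormDist μ (ENNReal.ofReal r) z ^ r = ∫⁻ x, edist x z ^ r ∂μ := by
  rw [eLpNormDist, eLpNorm_eq_lintegral_rpow_enorm_toReal (ENNReal.ofReal_pos.2 hr).ne'
    ENNReal.ofReal_ne_top, ENNReal.toReal_ofReal hr.le, ← ENNReal.rpow_mul,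
    one_div_mul_cancel hr.ne', ENNReal.rpow_one]
  simp only [enorm_eq_self]

variable [OpensMeasurableSpace X]

lemma aestronglyMeasurable_edist_left (μ : Measure X) (z : X) :
    AEStronglyMeasurable (fun x => edist x z) μ :=
  (continuous_id.edist continuous_const).measurable.aestronglyMeasurable

lemma measurable_edist_left_rpow (z : X) (r : ℝ) : Measurable fun x => edist x z ^ r :=
  (continuous_id.edist continuous_const).measurable.pow_const r

variable (μ : Measure X) {p : ℝ≥0∞}

lemma Busemann.eLpNormDist_le_of_isMidpoint (hbus : Busemann X) (hp : 1 ≤ p) {z₀ z₁ m : X}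
    (hm : IsMidpoint z₀ z₁ m) :
    eLpNormDist μ p m ≤ (eLpNormDist μ p z₀ + eLpNormDist μ p z₁) / 2 := by
  have hpt : ∀ x, edist x m ≤ (2⁻¹ : ℝ≥0) * (edist x z₀ + edist x z₁) := fun x => by
    rw [ENNReal.coe_inv_two, mul_comm, ← div_eq_mul_inv]
    exact hbus.edist_le_of_isMidpoint hm x
  calc eLpNormDist μ p m
      ≤ (2⁻¹ : ℝ≥0) • eLpNorm ((fun x => edist x z₀) + fun x => edist x z₁) p μ :=
        eLpNorm_le_nnreal_smul_eLpNorm_of_ae_le_mul' (ae_of_all _ hpt) p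
    _ ≤ (2⁻¹ : ℝ≥0) • (eLpNormDist μ p z₀ + eLpNormDist μ p z₁) := by
        gcongr
        exact eLpNorm_add_le (aestronglyMeasurable_edist_left μ z₀)
          (aestronglyMeasurable_edist_left μ z₁) hp
    _ = (eLpNormDist μ p z₀ + eLpNormDist μ p z₁) / 2 := by
        rw [ENNReal.smul_def, smul_eq_mul, ENNReal.coe_inv_two, mul_comm, ← div_eq_mul_inv]

variable [IsProbabilityMeasure μ]

lemma eLpNormDist_le_add_edist (hp : 1 ≤ p) (z z' : X) :
    eLpNormDist μ p z ≤ eLpNormDist μ p z' + edist z z' := by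
  calc eLpNormDist μ p z ≤ eLpNorm ((fun x => edist x z') + fun _ => edist z' z) p μ :=
        eLpNorm_mono_enorm fun x => by simpa using edist_triangle x z' z
    _ ≤ eLpNormDist μ p z' + eLpNorm (fun _ => edist z' z) p μ :=
        eLpNorm_add_le (aestronglyMeasurable_edist_left μ z') aestronglyMeasurable_const hp
    _ = eLpNormDist μ p z' + edist z z' := by
        rw [eLpNorm_const_of_isProbabilityMeasure μ (one_pos.trans_le hp).ne', enorm_eq_self,
          edist_comm]

lemma continuous_eLpNormDist (hp : 1 ≤ p) : Continuous (eLpNormDist μ p) :=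
  continuous_of_le_add_edist 1 ENNReal.one_ne_top fun z z' => by
    simpa using eLpNormDist_le_add_edist μ hp z z'

lemma edist_le_eLpNormDist_add (hp : 1 ≤ p) (z z' : X) :
    edist z z' ≤ eLpNormDist μ p z + eLpNormDist μ p z' := by
  calc edist z z' = eLpNorm (fun _ => edist z z') p μ := by
        rw [eLpNorm_const_of_isProbabilityMeasure μ (one_pos.trans_le hp).ne', enorm_eq_self]
    _ ≤ eLpNorm ((fun x => edist x z) + fun x => edist x z') p μ :=
        eLpNorm_mono_enorm fun x => by simpa [edist_comm z x] using edist_triangle z x z'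
    _ ≤ eLpNormDist μ p z + eLpNormDist μ p z' :=
        eLpNorm_add_le (aestronglyMeasurable_edist_left μ z)
          (aestronglyMeasurable_edist_left μ z') hp

lemma isBounded_setOf_eLpNormDist_le (hp : 1 ≤ p) {b : ℝ≥0∞} (hb : b ≠ ⊤) :
    Bornology.IsBounded {z | eLpNormDist μ p z ≤ b} :=
  Metric.isBounded_iff_ediam_ne_top.2 <| ne_top_of_le_ne_top (ENNReal.add_ne_top.2 ⟨hb, hb⟩) <|
    Metric.ediam_le fun z hz z' hz' =>
      (edist_le_eLpNormDist_add μ hp z z').trans (add_le_add hz hz')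

end LpDistance

theorem ReflexiveSpace.exists_forall_le {X : Type*} [PseudoMetricSpace X]
    (hX : ReflexiveSpace X) {f : X → ℝ≥0∞} (hf : LowerSemicontinuous f)
    (hconv : ∀ z₀ z₁ m, IsMidpoint z₀ z₁ m → f m ≤ max (f z₀) (f z₁))
    (hbdd : ∀ b ≠ ⊤, Bornology.IsBounded {z | f z ≤ b}) (htop : ⨅ z, f z ≠ ⊤) :
    ∃ z, ∀ w, f z ≤ f w := by
  set c := ⨅ z, f z
  -- `b = ⊤` is left out of the index set because `{f ≤ ⊤}` is all of `X`.
  obtain ⟨b₀, hb₀⟩ := exists_between htop.lt_top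
  have : Nonempty (Ioo c ⊤)ᵒᵈ := ⟨OrderDual.toDual ⟨b₀, hb₀⟩⟩
  let C : (Ioo c ⊤)ᵒᵈ → Set X := fun b => f ⁻¹' Iic (OrderDual.ofDual b).1
  have hC : ∀ b, (C b).Nonempty ∧ Bornology.IsBounded (C b) ∧ IsClosed (C b) ∧
      MConvexSet (C b) := fun b =>
    ⟨(iInf_lt_iff.1 (OrderDual.ofDual b).2.1).imp fun _ hz => hz.le,
      hbdd _ (OrderDual.ofDual b).2.2.ne, hf.isClosed_preimage _,
      fun _ h₀ _ h₁ _ hm => (hconv _ _ _ hm).trans (max_le h₀ h₁)⟩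
  have hanti : ∀ i j, i ≤ j → C j ⊆ C i :=
    fun i j hij z (hz : f z ≤ (OrderDual.ofDual j).1) =>
      show f z ≤ (OrderDual.ofDual i).1 from hz.trans hij
  obtain ⟨z, hz⟩ := hX _ inferInstance C hC hanti
  refine ⟨z, fun w => le_trans ?_ (iInf_le f w)⟩
  refine le_of_forall_gt_imp_ge_of_dense fun b hb => ?_
  obtain rfl | hb' := eq_or_ne b ⊤
  · exact le_top
  · exact mem_iInter.1 hz (OrderDual.toDual ⟨b, hb, hb'.lt_top⟩)

section Minimizer

variable {X : Type*} [MetricSpace X] [MeasurableSpace X] [OpensMeasurableSpace X]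
  (μ : Measure X) [IsProbabilityMeasure μ] {r : ℝ}

lemma eLpNormDist_rpow_lt_of_isMidpoint (hbus : Busemann X)
    (hstrict : StrictlyPConvexForSome X)
    (hr : 1 < r) {z₀ z₁ m : X} (hm : IsMidpoint z₀ z₁ m) (hne : z₀ ≠ z₁)
    (h₀ : eLpNormDist μ (ENNReal.ofReal r) z₀ ≠ ⊤)
    (h₁ : eLpNormDist μ (ENNReal.ofReal r) z₁ ≠ ⊤) :
    eLpNormDist μ (ENNReal.ofReal r) m ^ r <
      (eLpNormDist μ (ENNReal.ofReal r) z₀ ^ r +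
        eLpNormDist μ (ENNReal.ofReal r) z₁ ^ r) / 2 := by
  have hr0 : 0 < r := by linarith
  have hfin : eLpNormDist μ (ENNReal.ofReal r) m ^ r ≠ ⊤ := by
    refine ENNReal.rpow_ne_top_of_nonneg hr0.le (ne_top_of_le_ne_top ?_
      (hbus.eLpNormDist_le_of_isMidpoint μ (ENNReal.one_le_ofReal.2 hr.le) hm))
    exact ENNReal.div_ne_top (ENNReal.add_ne_top.2 ⟨h₀, h₁⟩) two_ne_zero
  simp only [eLpNormDist_ofReal_rpow μ hr0] at hfin ⊢
  calc ∫⁻ x, edist x m ^ r ∂μ < ∫⁻ x, (edist x z₀ ^ r + edist x z₁ ^ r) / 2 ∂μ :=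
        lintegral_strict_mono (IsProbabilityMeasure.ne_zero μ)
          (((measurable_edist_left_rpow z₀ r).add
            (measurable_edist_left_rpow z₁ r)).div_const 2).aemeasurable hfin
          (ae_of_all _ (edist_rpow_lt_of_isMidpoint hbus hstrict hr hm hne))
    _ = (∫⁻ x, edist x z₀ ^ r ∂μ + ∫⁻ x, edist x z₁ ^ r ∂μ) / 2 := by
        simp_rw [div_eq_mul_inv]
        rw [lintegral_mul_const' _ _ (by simp),
          lintegral_add_left (measurable_edist_left_rpow z₀ r)]

lemma eq_of_forall_eLpNormDist_le (hmid : MidpointSpace X) (hbus : Busemann X)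
    (hstrict : StrictlyPConvexForSome X)
    (hr : 1 < r) {z₀ z₁ : X}
    (h₀ : ∀ w, eLpNormDist μ (ENNReal.ofReal r) z₀ ≤ eLpNormDist μ (ENNReal.ofReal r) w)
    (h₁ : ∀ w, eLpNormDist μ (ENNReal.ofReal r) z₁ ≤ eLpNormDist μ (ENNReal.ofReal r) w)
    (hfin : eLpNormDist μ (ENNReal.ofReal r) z₀ ≠ ⊤) : z₀ = z₁ := by
  by_contra hne
  obtain ⟨m, hm⟩ := hmid z₀ z₁
  have heq := le_antisymm (h₁ z₀) (h₀ z₁)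
  have hlt := eLpNormDist_rpow_lt_of_isMidpoint μ hbus hstrict hr hm hne hfin (heq ▸ hfin)
  rw [heq, ENNReal.add_div, ENNReal.add_halves, ENNReal.rpow_lt_rpow_iff (by linarith)] at hlt
  exact hlt.not_ge (h₀ m)

theorem existsUnique_forall_eLpNormDist_le (hmid : MidpointSpace X) (hrefl : ReflexiveSpace X)
    (hbus : Busemann X)
    (hstrict : StrictlyPConvexForSome X)
    (hr : 1 < r) {x₀ : X} (hx₀ : eLpNormDist μ (ENNReal.ofReal r) x₀ ≠ ⊤) :
    ∃! z, ∀ w, eLpNormDist μ (ENNReal.ofReal r) z ≤ eLpNormDist μ (ENNReal.ofReal r) w := by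
  have hp : 1 ≤ ENNReal.ofReal r := ENNReal.one_le_ofReal.2 hr.le
  have hconv : ∀ z₀ z₁ m, IsMidpoint z₀ z₁ m → eLpNormDist μ (ENNReal.ofReal r) m ≤
      max (eLpNormDist μ (ENNReal.ofReal r) z₀) (eLpNormDist μ (ENNReal.ofReal r) z₁) :=
    fun z₀ z₁ m hm => (hbus.eLpNormDist_le_of_isMidpoint μ hp hm).trans <| by
      rw [ENNReal.div_le_iff two_ne_zero ENNReal.ofNat_ne_top, mul_two]
      exact add_le_add (le_max_left _ _) (le_max_right _ _)
  obtain ⟨z, hz⟩ := hrefl.exists_forall_le (continuous_eLpNormDist μ hp).lowerSemicontinuous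
    hconv (fun _ => isBounded_setOf_eLpNormDist_le μ hp)
    (ne_top_of_le_ne_top hx₀ (iInf_le _ x₀))
  exact ⟨z, hz, fun w hw =>
    eq_of_forall_eLpNormDist_le μ hmid hbus hstrict hr hw hz
      (ne_top_of_le_ne_top hx₀ (hw x₀))⟩

end Minimizer

lemma Wp_dirac_right {X : Type*} [MetricSpace X] [MeasurableSpace X] [OpensMeasurableSpace X]
    (μ : Measure X) [IsProbabilityMeasure μ] {r : ℝ} (hr : 0 < r) (z : X) :
    Wp r μ (Measure.dirac z) = eLpNormDist μ (ENNReal.ofReal r) z := by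
  have hcost : ∀ π ∈ Couplings μ (Measure.dirac z),
      ∫⁻ w, edist w.1 w.2 ^ r ∂π = ∫⁻ x, edist x z ^ r ∂μ := by
    rintro π ⟨hfst, hsnd⟩
    have hz : ∀ᵐ w ∂π, w.2 = z := ae_of_ae_map measurable_snd.aemeasurable <| by
      rw [hsnd]
      exact (ae_dirac_iff (measurableSet_singleton z)).2 rfl
    calc ∫⁻ w, edist w.1 w.2 ^ r ∂π = ∫⁻ w, edist w.1 z ^ r ∂π :=
          lintegral_congr_ae (hz.mono fun w hw => by simp only [hw])
      _ = ∫⁻ x, edist x z ^ r ∂μ := by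
          rw [← hfst, lintegral_map (measurable_edist_left_rpow z r) measurable_fst]
  have hprod : μ.prod (Measure.dirac z) ∈ Couplings μ (Measure.dirac z) :=
    ⟨by simp, by simp⟩
  rw [Wp, le_antisymm (iInf₂_le_of_le _ hprod (hcost _ hprod).le)
    (le_iInf₂ fun π hπ => (hcost π hπ).ge), ← eLpNormDist_ofReal_rpow μ hr,
    ← ENNReal.rpow_mul, mul_one_div_cancel hr.ne', ENNReal.rpow_one]

lemma hasUniqueProj_range {Y Z : Type*} {ρ : Y → Y → ℝ≥0∞} {g : Z → Y} {y : Y}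
    (h : ∃! z, ∀ w, ρ y (g z) ≤ ρ y (g w)) : HasUniqueProj ρ (range g) y := by
  have hdist : distToSet ρ y (range g) = ⨅ w, ρ y (g w) := iInf_range
  obtain ⟨z, hz, huniq⟩ := h
  refine ⟨g z, ⟨mem_range_self z, hdist ▸ le_antisymm (le_iInf hz) (iInf_le _ z)⟩, ?_⟩
  rintro _ ⟨⟨z', rfl⟩, hz'⟩
  rw [huniq z' fun w => (hz'.trans hdist).le.trans (iInf_le _ w)]

lemma globalReach_eq_top {Y : Type*} {ρ : Y → Y → ℝ≥0∞} {S A : Set Y}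
    (h : ∀ y ∈ S, HasUniqueProj ρ A y) : globalReach ρ S A = ⊤ :=
  eq_top_iff.2 <| le_iInf₂ fun _ _ => le_sSup fun y hy _ => h y hy

theorem reach_infinite_of_busemann {X : Type*} [MetricSpace X] [MeasurableSpace X]
    [BorelSpace X] (hmid : MidpointSpace X) (hrefl : ReflexiveSpace X)
    (hbus : Busemann X)
    (hstrict : (∃ p : ℝ, 1 ≤ p ∧ StrictlyPConvex X p) ∨ StrictlyInftyConvex X) :
    ∀ r : ℝ, 1 < r →
      (∀ μ ∈ WSpace X r, HasUniqueProj (Wp r) (Diracs X) μ) ∧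
      globalReach (Wp r) (WSpace X r) (Diracs X) = ⊤ := by
  intro r hr
  have hr0 : 0 < r := by linarith
  have hproj : ∀ μ ∈ WSpace X r, HasUniqueProj (Wp r) (Diracs X) μ := by
    rintro μ ⟨hμ, x₀, hx₀⟩
    have hfin : eLpNormDist μ (ENNReal.ofReal r) x₀ ≠ ⊤ := fun h => hx₀ <| by
      rw [← eLpNormDist_ofReal_rpow μ hr0, h, ENNReal.top_rpow_of_pos hr0]
    apply hasUniqueProj_range
    simp only [Wp_dirac_right μ hr0]
    exact existsUnique_forall_eLpNormDist_le μ hmid hrefl hbus hstrict hr hfin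
  exact ⟨hproj, globalReach_eq_top hproj⟩
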